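/- arXiv:2209.03753 — 2 statements merged into one kernel-verified Lean document; each statement's English description precedes it below -/
import Mathlib

section
/- For every natural number V ≥ 1, ∑_{i=0}^{⌊log₂ V⌋} (i+1)(i+2)(2^i + 1) ≤ 4·V·(log₂ V)² whenever V ≥ 16 (equivalently, the sum is O(V log² V)). -/
/-!
The summand at `i` is at most `(i+1)(i+2) 2^(i+1)`, so the terms grow geometrically and the sum is
dominated by its last term: an induction on `L = ⌊log₂ V⌋` gives the bound `4 · 2^L · L²` once
`L ≥ 4`, and then `2^L ≤ V` and `L ≤ log₂ V`.
-/

theorem sum_range_succ_mul_two_pow_add_one_le {L : ℕ} (hL : 4 ≤ L) :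
    ∑ i ∈ Finset.range (L + 1), (i + 1) * (i + 2) * (2 ^ i + 1) ≤ 4 * 2 ^ L * L ^ 2 := by
  induction L, hL using Nat.le_induction with
  | base => decide
  | succ L hL ih =>
    have h16 : 16 ≤ 2 ^ L := le_trans (by norm_num) (Nat.pow_le_pow_right two_pos hL)
    rw [Finset.sum_range_succ, pow_succ]
    nlinarith

/-- For every natural number `V ≥ 16`,
`∑_{i=0}^{⌊log₂ V⌋} (i+1)(i+2)(2^i + 1) ≤ 4·V·(log₂ V)²`. -/
theorem stmt_9 (V : ℕ) (hV : 16 ≤ V) :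
    (∑ i ∈ Finset.range (Nat.log 2 V + 1), ((i + 1) * (i + 2) * (2 ^ i + 1) : ℝ))
      ≤ 4 * V * (Real.logb 2 V) ^ 2 := by
  set L := Nat.log 2 V
  have hL : 4 ≤ L := Nat.le_log_of_pow_le one_lt_two (by omega)
  have h2L : (2 : ℝ) ^ L ≤ V := by exact_mod_cast Nat.pow_log_le_self 2 (by omega)
  have hlog : (L : ℝ) ^ 2 ≤ Real.logb 2 V ^ 2 := by
    gcongr
    exact_mod_cast Real.natLog_le_logb V 2
  calc (∑ i ∈ Finset.range (L + 1), ((i + 1) * (i + 2) * (2 ^ i + 1) : ℝ))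
      ≤ 4 * 2 ^ L * L ^ 2 := by exact_mod_cast sum_range_succ_mul_two_pow_add_one_le hL
    _ ≤ 4 * V * Real.logb 2 V ^ 2 := by gcongr
end

section
/- Let 𝒢 be a finite family of m components with nonnegative weights P[G] summing to at most 1, and for each unordered pair {G,G'} of differently-labeled components let φ₊(G,G') be their positive discriminative feature, with β_φ = ∑_{{G,G'} ∈ P_φ} P[G]P[G']. Then for any threshold β, ∑_{φ : β_φ ≤ β} ∑_{{G,G'} ∈ P_φ} min(P[G], P[G']) ≤ sqrt(β)·m²/2. -/
/-- Let `𝒢` be a family of `m` components with nonnegative weights `P` summing to at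
most 1; for each unordered pair of differently-labeled components let `feat` be their
(symmetric) positive discriminative feature, and let `βφ φ` be the total pair-weight
of the pairs separated by `φ`.  Then for any threshold `β`, the sum over features
with `βφ φ ≤ β` of the min-weights of their pairs is at most `sqrt β · m² / 2`.
(Sums over unordered pairs are expressed as half-sums over `offDiag`.) -/
theorem stmt_14 {α Φ : Type*} [DecidableEq α] [DecidableEq Φ] (m : ℕ)
    (𝒢 : Finset α) (h𝒢 : 𝒢.card = m)
    (P : α → ℝ) (hP : ∀ G, 0 ≤ P G) (hsum : ∑ G ∈ 𝒢, P G ≤ 1)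
    {Y : Type*} [DecidableEq Y] (lab : α → Y)
    (feat : α → α → Φ) (hsymm : ∀ G G', feat G G' = feat G' G)
    (β : ℝ) (hβ : 0 ≤ β) :
    let Pairs := 𝒢.offDiag.filter (fun p => lab p.1 ≠ lab p.2)
    let βφ : Φ → ℝ := fun φ =>
      (∑ p ∈ Pairs.filter (fun p => feat p.1 p.2 = φ), P p.1 * P p.2) / 2
    let Φ₀ := Pairs.image (fun p => feat p.1 p.2)
    (∑ φ ∈ Φ₀.filter (fun φ => βφ φ ≤ β),
        (∑ p ∈ Pairs.filter (fun p => feat p.1 p.2 = φ), min (P p.1) (P p.2)) / 2)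
      ≤ Real.sqrt β * m ^ 2 / 2 := by
  intro Pairs βφ Φ₀
  -- per-φ bound
  have key : ∀ φ ∈ Φ₀.filter (fun φ => βφ φ ≤ β),
      (∑ p ∈ Pairs.filter (fun p => feat p.1 p.2 = φ), min (P p.1) (P p.2))
        ≤ Real.sqrt β * (Pairs.filter (fun p => feat p.1 p.2 = φ)).card := by
    intro φ hφ
    obtain ⟨hφ0, hβφ⟩ := Finset.mem_filter.mp hφ
    set S := Pairs.filter (fun p => feat p.1 p.2 = φ) with hS
    -- S is nonempty and symmetric, so card ≥ 2
    have hswap : ∀ p ∈ S, p.swap ∈ S := by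
      intro p hp
      simp only [hS, Pairs, Finset.mem_filter, Finset.mem_offDiag] at hp ⊢
      obtain ⟨⟨⟨h1, h2, h3⟩, h4⟩, h5⟩ := hp
      exact ⟨⟨⟨h2, h1, fun h => h3 h.symm⟩, fun h => h4 h.symm⟩, by rw [← hsymm]; exact h5⟩
    have hcard2 : 2 ≤ S.card := by
      obtain ⟨q, hq, hq'⟩ := Finset.mem_image.mp hφ0
      have hp : q ∈ S := Finset.mem_filter.mpr ⟨hq, hq'⟩
      set p := q
      have hpne : p ≠ p.swap := by
        have := (Finset.mem_filter.mp hp).1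
        have := (Finset.mem_offDiag.mp (Finset.mem_filter.mp this).1).2.2
        intro h
        exact this (congrArg Prod.fst h)
      exact Finset.one_lt_card.mpr ⟨p, hp, p.swap, hswap p hp, hpne⟩
    have hsumβ : ∑ p ∈ S, P p.1 * P p.2 ≤ 2 * β := by
      have : (∑ p ∈ S, P p.1 * P p.2) / 2 ≤ β := hβφ
      linarith
    -- min ≤ sqrt of product
    have step1 : (∑ p ∈ S, min (P p.1) (P p.2)) ≤ ∑ p ∈ S, Real.sqrt (P p.1 * P p.2) := by
      apply Finset.sum_le_sum
      intro p _
      have h0 : 0 ≤ min (P p.1) (P p.2) := le_min (hP _) (hP _)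
      have h1 : min (P p.1) (P p.2) ^ 2 ≤ P p.1 * P p.2 := by
        rcases le_total (P p.1) (P p.2) with h | h
        · rw [min_eq_left h]; nlinarith [hP p.1]
        · rw [min_eq_right h]; nlinarith [hP p.2]
      calc min (P p.1) (P p.2) = Real.sqrt (min (P p.1) (P p.2) ^ 2) :=
            (Real.sqrt_sq h0).symm
        _ ≤ Real.sqrt (P p.1 * P p.2) := Real.sqrt_le_sqrt h1
    -- Cauchy-Schwarz
    have step2 : (∑ p ∈ S, Real.sqrt (P p.1 * P p.2)) ^ 2
        ≤ S.card * ∑ p ∈ S, P p.1 * P p.2 := by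
      have := sq_sum_le_card_mul_sum_sq (s := S)
        (f := fun p => Real.sqrt (P p.1 * P p.2))
      calc (∑ p ∈ S, Real.sqrt (P p.1 * P p.2)) ^ 2
          ≤ S.card * ∑ p ∈ S, Real.sqrt (P p.1 * P p.2) ^ 2 := this
        _ = S.card * ∑ p ∈ S, P p.1 * P p.2 := by
            congr 1
            apply Finset.sum_congr rfl
            intro p _
            exact Real.sq_sqrt (mul_nonneg (hP _) (hP _))
    have hnn : (0:ℝ) ≤ ∑ p ∈ S, Real.sqrt (P p.1 * P p.2) :=
      Finset.sum_nonneg fun p _ => Real.sqrt_nonneg _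
    have hrhs : (0:ℝ) ≤ Real.sqrt β * S.card :=
      mul_nonneg (Real.sqrt_nonneg _) (Nat.cast_nonneg _)
    have hsq : (∑ p ∈ S, Real.sqrt (P p.1 * P p.2)) ^ 2 ≤ (Real.sqrt β * S.card) ^ 2 := by
      have h2 : (2:ℝ) ≤ (S.card : ℝ) := by exact_mod_cast hcard2
      have : (Real.sqrt β * S.card) ^ 2 = β * S.card ^ 2 := by
        rw [mul_pow, Real.sq_sqrt hβ]
      rw [this]
      calc (∑ p ∈ S, Real.sqrt (P p.1 * P p.2)) ^ 2
          ≤ S.card * ∑ p ∈ S, P p.1 * P p.2 := step2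
        _ ≤ S.card * (2 * β) := by
            apply mul_le_mul_of_nonneg_left hsumβ (Nat.cast_nonneg _)
        _ ≤ β * S.card ^ 2 := by nlinarith
    have step3 : (∑ p ∈ S, Real.sqrt (P p.1 * P p.2)) ≤ Real.sqrt β * S.card := by
      nlinarith
    linarith
  -- sum over features
  have hsplit : ∑ φ ∈ Φ₀, ((Pairs.filter (fun p => feat p.1 p.2 = φ)).card : ℝ)
      = (Pairs.card : ℝ) := by
    rw [← Nat.cast_sum]
    congr 1
    exact (Finset.card_eq_sum_card_fiberwise (fun p hp => Finset.mem_image_of_mem _ hp)).symm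
  calc (∑ φ ∈ Φ₀.filter (fun φ => βφ φ ≤ β),
        (∑ p ∈ Pairs.filter (fun p => feat p.1 p.2 = φ), min (P p.1) (P p.2)) / 2)
      ≤ ∑ φ ∈ Φ₀.filter (fun φ => βφ φ ≤ β),
          Real.sqrt β * (Pairs.filter (fun p => feat p.1 p.2 = φ)).card / 2 := by
        apply Finset.sum_le_sum
        intro φ hφ
        linarith [key φ hφ]
    _ ≤ ∑ φ ∈ Φ₀, Real.sqrt β * (Pairs.filter (fun p => feat p.1 p.2 = φ)).card / 2 := by
        apply Finset.sum_le_sum_of_subset_of_nonneg (Finset.filter_subset _ _)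
        intro φ _ _
        positivity
    _ = Real.sqrt β * Pairs.card / 2 := by
        rw [← Finset.sum_div, ← Finset.mul_sum, hsplit]
    _ ≤ Real.sqrt β * m ^ 2 / 2 := by
        have h1 : Pairs.card ≤ 𝒢.offDiag.card := Finset.card_filter_le _ _
        have h2 : 𝒢.offDiag.card = m * m - m := by rw [Finset.offDiag_card, h𝒢]
        have h3 : (Pairs.card : ℝ) ≤ (m : ℝ) ^ 2 := by
          have : Pairs.card ≤ m * m := h1.trans (h2 ▸ Nat.sub_le _ _)
          calc (Pairs.card : ℝ) ≤ (m * m : ℕ) := by exact_mod_cast this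
            _ = (m:ℝ)^2 := by push_cast; ring
        have hs := Real.sqrt_nonneg β
        have := mul_le_mul_of_nonneg_left h3 hs
        linarith
end
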